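/- Lemma 6.1(d) (removing a middle black bead from a necklace). Let J ≥ 1 and let l be a necklace with three pairwise distinct positions v₁, v₂, v₃ such that: v₂ is a black position lying on the clockwise arc from v₁ to v₃; this clockwise arc from v₁ to v₃ contains at most J black positions (v₁ and v₃ themselves being excluded, as endpoints); the clockwise arc from v₁ to v₂ contains exactly m₁ white positions; and the clockwise arc from v₂ to v₃ contains exactly m₂ white positions. If l' = l.eraseIdx v₂ is obtained from l by removing the bead at v₂, then μ_J(l') ≤ μ_J(l) − m₁·m₂. -/
import Mathlib


namespace Necklace

/-- The cyclic relative position of `p` with respect to `i` on a necklace of length `n`. -/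
def cyclicRel (n : ℕ) (i p : Fin n) : ℕ := ((p : ℕ) + n - (i : ℕ)) % n

/-- `InArc i j p` means that the position `p` lies on the clockwise arc from `i` to `j`
(excluding the endpoints `i` and `j`). -/
def InArc {n : ℕ} (i j p : Fin n) : Prop :=
  0 < cyclicRel n i p ∧ cyclicRel n i p < cyclicRel n i j

instance {n : ℕ} (i j p : Fin n) : Decidable (InArc i j p) :=
  inferInstanceAs (Decidable (0 < cyclicRel n i p ∧ cyclicRel n i p < cyclicRel n i j))

/-- An entry `false` of a necklace is a white bead, an entry `true` is a black bead. -/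
def IsWhite (l : List Bool) (p : Fin l.length) : Prop := l.get p = false

def IsBlack (l : List Bool) (p : Fin l.length) : Prop := l.get p = true

instance (l : List Bool) (p : Fin l.length) : Decidable (IsWhite l p) :=
  inferInstanceAs (Decidable (l.get p = false))

instance (l : List Bool) (p : Fin l.length) : Decidable (IsBlack l p) :=
  inferInstanceAs (Decidable (l.get p = true))

/-- The number of black beads on the clockwise arc from `i` to `j`. -/
def blackArc (l : List Bool) (i j : Fin l.length) : ℕ :=
  (Finset.univ.filter fun p : Fin l.length => InArc i j p ∧ IsBlack l p).card

/-- The number of white beads on the clockwise arc from `i` to `j`. -/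
def whiteArc (l : List Bool) (i j : Fin l.length) : ℕ :=
  (Finset.univ.filter fun p : Fin l.length => InArc i j p ∧ IsWhite l p).card

/-- `P l k` is the set of ordered pairs `(i, j)` of distinct white beads of the necklace
`l` whose clockwise arc from `i` to `j` contains at least `k` black beads. -/
def P (l : List Bool) (k : ℕ) : Finset (Fin l.length × Fin l.length) :=
  Finset.univ.filter fun q : Fin l.length × Fin l.length =>
    q.1 ≠ q.2 ∧ IsWhite l q.1 ∧ IsWhite l q.2 ∧ k ≤ blackArc l q.1 q.2

/-- The `J`-mixture `μ_J(l)` of the necklace `l`. -/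
def mixture (J : ℕ) (l : List Bool) : ℕ := ∑ k ∈ Finset.Icc 1 J, (P l k).card

/-- The number of white beads of `l`. -/
def whiteCount (l : List Bool) : ℕ := l.count false

lemma cyclicRel_eq {n : ℕ} (i p : Fin n) :
    cyclicRel n i p = if (i:ℕ) ≤ (p:ℕ) then (p:ℕ) - i else (p:ℕ) + n - i := by
  have hi := i.isLt; have hp := p.isLt
  unfold cyclicRel
  rcases le_or_gt (i:ℕ) (p:ℕ) with h | h
  · rw [if_pos h]
    have he : (p:ℕ) + n - i = ((p:ℕ) - i) + n := by omega
    rw [he, Nat.add_mod_right, Nat.mod_eq_of_lt (by omega)]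
  · rw [if_neg (by omega)]
    exact Nat.mod_eq_of_lt (by omega)

lemma cyclicRel_pos {n : ℕ} {i j : Fin n} (h : i ≠ j) : 0 < cyclicRel n i j := by
  have hi := i.isLt; have hj := j.isLt
  have hne : (i:ℕ) ≠ (j:ℕ) := fun he => h (Fin.ext he)
  rw [cyclicRel_eq]; split_ifs <;> omega

lemma cyclicRel_lt {n : ℕ} (i j : Fin n) : cyclicRel n i j < n := by
  have hi := i.isLt; have hj := j.isLt
  rw [cyclicRel_eq]; split_ifs <;> omega

lemma cyclicRel_sub {n : ℕ} (o i j : Fin n) (h : cyclicRel n o i ≤ cyclicRel n o j) :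
    cyclicRel n i j = cyclicRel n o j - cyclicRel n o i := by
  have hi := i.isLt; have hj := j.isLt; have ho := o.isLt
  simp only [cyclicRel_eq] at h ⊢
  split_ifs at h ⊢ <;> omega

lemma cyclicRel_sub' {n : ℕ} (o i j : Fin n) (h : cyclicRel n o j < cyclicRel n o i) :
    cyclicRel n i j = cyclicRel n o j + n - cyclicRel n o i := by
  have hi := i.isLt; have hj := j.isLt; have ho := o.isLt
  simp only [cyclicRel_eq] at h ⊢
  split_ifs at h ⊢ <;> omega

def emb {n m : ℕ} (h : m + 1 = n) (v : Fin n) (p : Fin m) : Fin n :=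
  ⟨if (p:ℕ) < (v:ℕ) then (p:ℕ) else (p:ℕ) + 1, by have := p.isLt; split_ifs <;> omega⟩

lemma emb_coe {n m : ℕ} (h : m + 1 = n) (v : Fin n) (p : Fin m) :
    (emb h v p : ℕ) = if (p:ℕ) < (v:ℕ) then (p:ℕ) else (p:ℕ) + 1 := rfl

lemma emb_ne {n m : ℕ} (h : m + 1 = n) (v : Fin n) (p : Fin m) : emb h v p ≠ v := by
  have hp := p.isLt
  simp only [Ne, Fin.ext_iff, emb_coe]; split_ifs <;> omega

lemma emb_injective {n m : ℕ} (h : m + 1 = n) (v : Fin n) :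
    Function.Injective (emb h v) := by
  intro a b hab
  have := congrArg Fin.val hab
  simp only [emb_coe] at this
  have ha := a.isLt; have hb := b.isLt
  apply Fin.ext; split_ifs at this <;> omega

lemma emb_surj {n m : ℕ} (h : m + 1 = n) (v : Fin n) (w : Fin n) (hw : w ≠ v) :
    ∃ p, emb h v p = w := by
  have hw' : (w:ℕ) ≠ (v:ℕ) := fun he => hw (Fin.ext he)
  have hwlt := w.isLt; have hv := v.isLt
  refine ⟨⟨if (w:ℕ) < v then (w:ℕ) else (w:ℕ) - 1, by split_ifs <;> omega⟩, ?_⟩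
  apply Fin.ext; simp only [emb_coe]; split_ifs <;> omega

lemma cyclicRel_emb {n m : ℕ} (h : m + 1 = n) (v : Fin n) (i p : Fin m) :
    cyclicRel n (emb h v i) (emb h v p)
      = if cyclicRel m i p < cyclicRel n (emb h v i) v
        then cyclicRel m i p else cyclicRel m i p + 1 := by
  have hi := i.isLt; have hp := p.isLt; have hv := v.isLt
  simp only [cyclicRel_eq, emb_coe]
  split_ifs <;> omega

lemma inArc_emb_iff {n m : ℕ} (h : m + 1 = n) (v : Fin n) (i j p : Fin m) :
    InArc (emb h v i) (emb h v j) (emb h v p) ↔ InArc i j p := by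
  have h1 := cyclicRel_emb h v i p
  have h2 := cyclicRel_emb h v i j
  have hd : 0 < cyclicRel n (emb h v i) v := cyclicRel_pos (emb_ne h v i)
  unfold InArc
  split_ifs at h1 h2 <;> omega

lemma inArc_emb_v_iff {n m : ℕ} (h : m + 1 = n) (v : Fin n) (i j : Fin m) :
    InArc (emb h v i) (emb h v j) v ↔ cyclicRel n (emb h v i) v ≤ cyclicRel m i j := by
  have h2 := cyclicRel_emb h v i j
  have hd : 0 < cyclicRel n (emb h v i) v := cyclicRel_pos (emb_ne h v i)
  unfold InArc
  split_ifs at h2 <;> omega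


/-- auxiliary: the set of ordered pairs of distinct white beads. -/
def pairsW (l : List Bool) : Finset (Fin l.length × Fin l.length) :=
  Finset.univ.filter fun q : Fin l.length × Fin l.length =>
    q.1 ≠ q.2 ∧ IsWhite l q.1 ∧ IsWhite l q.2

lemma P_eq_filter (l : List Bool) (k : ℕ) :
    P l k = (pairsW l).filter (fun q => k ≤ blackArc l q.1 q.2) := by
  unfold P pairsW
  rw [Finset.filter_filter]
  apply Finset.filter_congr
  intro q _
  tauto

lemma sum_ite_le (J b : ℕ) : (∑ k ∈ Finset.Icc 1 J, if k ≤ b then 1 else 0) = min J b := by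
  rw [← Finset.card_filter]
  have h : (Finset.Icc 1 J).filter (fun k => k ≤ b) = Finset.Icc 1 (min J b) := by
    ext x
    simp only [Finset.mem_filter, Finset.mem_Icc]
    omega
  rw [h, Nat.card_Icc]
  omega

lemma mixture_eq_sum_min (J : ℕ) (l : List Bool) :
    mixture J l = ∑ q ∈ pairsW l, min J (blackArc l q.1 q.2) := by
  unfold mixture
  have h1 : ∀ k, (P l k).card = ∑ q ∈ pairsW l, if k ≤ blackArc l q.1 q.2 then 1 else 0 := by
    intro k
    rw [P_eq_filter, Finset.card_filter]
  simp only [h1]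
  rw [Finset.sum_comm]
  exact Finset.sum_congr rfl fun q _ => sum_ite_le J _

/-- Lemma 6.1(d): if a black bead `v₂` lies on the clockwise arc from `v₁` to `v₃`, this
arc contains at most `J` black beads, and the arcs `v₁–v₂` and `v₂–v₃` contain `m₁` and
`m₂` white beads respectively, then removing `v₂` decreases `μ_J` by at least `m₁·m₂`. -/
theorem mixture_erase_middle_black (J : ℕ) (hJ : 1 ≤ J) (l : List Bool) (hl : l ≠ [])
    (v₁ v₂ v₃ : Fin l.length)
    (h12 : v₁ ≠ v₂) (h13 : v₁ ≠ v₃) (h23 : v₂ ≠ v₃)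
    (hblack : IsBlack l v₂) (hmem : InArc v₁ v₃ v₂)
    (harc : blackArc l v₁ v₃ ≤ J)
    (m₁ m₂ : ℕ) (hm₁ : m₁ = whiteArc l v₁ v₂) (hm₂ : m₂ = whiteArc l v₂ v₃) :
    mixture J (l.eraseIdx (v₂ : ℕ)) + m₁ * m₂ ≤ mixture J l := by
  classical
  have hv2 := v₂.isLt
  have hlen : (l.eraseIdx (v₂ : ℕ)).length + 1 = l.length := by
    rw [List.length_eraseIdx, if_pos hv2]; omega
  set l' := l.eraseIdx (v₂ : ℕ) with hl'def
  set F : Fin l'.length → Fin l.length := emb hlen v₂ with hFdef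
  -- beads are preserved by the embedding
  have hget : ∀ p : Fin l'.length, l'.get p = l.get (F p) := by
    intro p
    have hp := p.isLt
    simp only [List.get_eq_getElem, hl'def]
    rw [List.getElem_eraseIdx]
    rcases lt_or_ge (p : ℕ) (v₂ : ℕ) with h | h
    · rw [dif_pos h]
      have hc : ((F p) : ℕ) = (p : ℕ) := by simp [hFdef, emb_coe, h]
      simp only [hc]
    · rw [dif_neg (by omega)]
      have hc : ((F p) : ℕ) = (p : ℕ) + 1 := by
        simp only [hFdef, emb_coe]; rw [if_neg (by omega)]
      simp only [hc]
  have hwhite : ∀ p : Fin l'.length, IsWhite l' p ↔ IsWhite l (F p) := by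
    intro p; unfold IsWhite; rw [hget]
  have hblk : ∀ p : Fin l'.length, IsBlack l' p ↔ IsBlack l (F p) := by
    intro p; unfold IsBlack; rw [hget]
  have hWne : ∀ p : Fin l.length, IsWhite l p → p ≠ v₂ := by
    intro p hw he
    rw [he] at hw
    unfold IsWhite at hw; unfold IsBlack at hblack
    rw [hblack] at hw; exact Bool.noConfusion hw
  -- black bead count transfer
  have hBlackEq : ∀ i j : Fin l'.length,
      blackArc l (F i) (F j)
        = blackArc l' i j + (if InArc (F i) (F j) v₂ then 1 else 0) := by
    intro i j
    unfold blackArc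
    set T : Finset (Fin l.length) :=
      Finset.univ.filter (fun p => InArc (F i) (F j) p ∧ IsBlack l p) with hT
    have hsplit := Finset.card_filter_add_card_filter_not
      (s := T) (p := fun p => p = v₂)
    have h1 : (T.filter (fun p => p = v₂)).card
        = (if InArc (F i) (F j) v₂ then 1 else 0) := by
      rw [Finset.filter_eq']
      by_cases hv : InArc (F i) (F j) v₂
      · rw [if_pos (by simp [hT, Finset.mem_filter, hv, hblack]), if_pos hv,
          Finset.card_singleton]
      · rw [if_neg (by simp [hT, Finset.mem_filter, hv]), if_neg hv, Finset.card_empty]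
    have h2 : (Finset.univ.filter
        (fun p : Fin l'.length => InArc i j p ∧ IsBlack l' p)).card
        = (T.filter (fun p => ¬ p = v₂)).card := by
      refine Finset.card_bij (fun p _ => F p) ?_ ?_ ?_
      · intro p hp
        simp only [Finset.mem_filter, Finset.mem_univ, true_and] at hp
        simp only [Finset.mem_filter, hT, Finset.mem_univ, true_and]
        exact ⟨⟨(inArc_emb_iff hlen v₂ i j p).mpr hp.1, (hblk p).mp hp.2⟩, emb_ne hlen v₂ p⟩
      · intro a _ b _ hab
        exact emb_injective hlen v₂ hab
      · intro w hw
        simp only [Finset.mem_filter, hT, Finset.mem_univ, true_and] at hw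
        obtain ⟨⟨hw1, hw2⟩, hw3⟩ := hw
        obtain ⟨p, hp⟩ := emb_surj hlen v₂ w hw3
        refine ⟨p, ?_, hp⟩
        simp only [Finset.mem_filter, Finset.mem_univ, true_and]
        rw [← hp] at hw1 hw2
        exact ⟨(inArc_emb_iff hlen v₂ i j p).mp hw1, (hblk p).mpr hw2⟩
    omega
  -- arc geometry
  have harcfacts : ∀ a b : Fin l.length, InArc v₁ v₂ a → InArc v₂ v₃ b →
      InArc a b v₂ ∧ blackArc l a b ≤ blackArc l v₁ v₃ ∧ a ≠ b := by
    intro a b ha hb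
    obtain ⟨ha1, ha2⟩ := ha
    obtain ⟨hb1, hb2⟩ := hb
    obtain ⟨hm1, hm2⟩ := hmem
    have hsub23 : cyclicRel l.length v₂ v₃
        = cyclicRel l.length v₁ v₃ - cyclicRel l.length v₁ v₂ :=
      cyclicRel_sub v₁ v₂ v₃ (le_of_lt hm2)
    have hlt3 := cyclicRel_lt v₁ v₃
    have hltb := cyclicRel_lt v₁ b
    have hrb : cyclicRel l.length v₁ v₂ ≤ cyclicRel l.length v₁ b := by
      by_contra hcon
      push_neg at hcon
      have := cyclicRel_sub' v₁ v₂ b hcon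
      omega
    have hsb : cyclicRel l.length v₂ b
        = cyclicRel l.length v₁ b - cyclicRel l.length v₁ v₂ :=
      cyclicRel_sub v₁ v₂ b hrb
    have hne : a ≠ b := by
      intro he
      rw [he] at ha2
      omega
    have h1 : cyclicRel l.length a v₂
        = cyclicRel l.length v₁ v₂ - cyclicRel l.length v₁ a :=
      cyclicRel_sub v₁ a v₂ (le_of_lt ha2)
    have h2 : cyclicRel l.length a b
        = cyclicRel l.length v₁ b - cyclicRel l.length v₁ a :=
      cyclicRel_sub v₁ a b (by omega)
    have hsubset : ∀ p : Fin l.length, InArc a b p → InArc v₁ v₃ p := by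
      intro p hp
      obtain ⟨hp1, hp2⟩ := hp
      have hltp := cyclicRel_lt v₁ p
      have hra : cyclicRel l.length v₁ a ≤ cyclicRel l.length v₁ p := by
        by_contra hcon
        push_neg at hcon
        have := cyclicRel_sub' v₁ a p hcon
        omega
      have hsp : cyclicRel l.length a p
          = cyclicRel l.length v₁ p - cyclicRel l.length v₁ a :=
        cyclicRel_sub v₁ a p hra
      exact ⟨by omega, by omega⟩
    refine ⟨⟨by omega, by omega⟩, ?_, hne⟩
    apply Finset.card_le_card
    intro p hp
    simp only [Finset.mem_filter, Finset.mem_univ, true_and] at hp ⊢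
    exact ⟨hsubset p hp.1, hp.2⟩
  -- white sets on the two arcs
  set A : Finset (Fin l.length) :=
    Finset.univ.filter (fun p => InArc v₁ v₂ p ∧ IsWhite l p) with hA
  set B : Finset (Fin l.length) :=
    Finset.univ.filter (fun p => InArc v₂ v₃ p ∧ IsWhite l p) with hB
  have hAcard : A.card = m₁ := by rw [hm₁]; rfl
  have hBcard : B.card = m₂ := by rw [hm₂]; rfl
  -- transport of the mixture sum
  have hS : mixture J l = ∑ q ∈ pairsW l', min J (blackArc l (F q.1) (F q.2)) := by
    rw [mixture_eq_sum_min]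
    refine (Finset.sum_bij (fun (q : Fin l'.length × Fin l'.length) _ => (F q.1, F q.2))
      ?_ ?_ ?_ ?_).symm
    · intro q hq
      simp only [pairsW, Finset.mem_filter, Finset.mem_univ, true_and] at hq ⊢
      exact ⟨fun he => hq.1 (emb_injective hlen v₂ he), (hwhite q.1).mp hq.2.1,
        (hwhite q.2).mp hq.2.2⟩
    · intro a _ b _ hab
      have h1 := emb_injective hlen v₂ (congrArg Prod.fst hab)
      have h2 := emb_injective hlen v₂ (congrArg Prod.snd hab)
      exact Prod.ext h1 h2
    · intro q hq
      simp only [pairsW, Finset.mem_filter, Finset.mem_univ, true_and] at hq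
      obtain ⟨hne, hw1, hw2⟩ := hq
      obtain ⟨p1, hp1⟩ := emb_surj hlen v₂ q.1 (hWne _ hw1)
      obtain ⟨p2, hp2⟩ := emb_surj hlen v₂ q.2 (hWne _ hw2)
      refine ⟨(p1, p2), ?_, Prod.ext hp1 hp2⟩
      simp only [pairsW, Finset.mem_filter, Finset.mem_univ, true_and]
      refine ⟨fun he => hne ?_,
        (hwhite p1).mpr (by rw [show F p1 = q.1 from hp1]; exact hw1),
        (hwhite p2).mpr (by rw [show F p2 = q.2 from hp2]; exact hw2)⟩
      rw [← hp1, ← hp2, he]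
    · intro a _; rfl
  have hS' : mixture J l' = ∑ q ∈ pairsW l', min J (blackArc l' q.1 q.2) :=
    mixture_eq_sum_min J l'
  -- counting the special pairs
  have hcount : (∑ q ∈ pairsW l', if F q.1 ∈ A ∧ F q.2 ∈ B then 1 else 0) = m₁ * m₂ := by
    rw [Finset.card_filter (s := pairsW l') (p := fun q => F q.1 ∈ A ∧ F q.2 ∈ B) |>.symm]
    rw [← hAcard, ← hBcard, ← Finset.card_product]
    refine Finset.card_bij (fun q _ => (F q.1, F q.2)) ?_ ?_ ?_
    · intro q hq
      simp only [Finset.mem_filter] at hq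
      simp only [Finset.mem_product]
      exact hq.2
    · intro a ha b hb hab
      have h1 := emb_injective hlen v₂ (congrArg Prod.fst hab)
      have h2 := emb_injective hlen v₂ (congrArg Prod.snd hab)
      exact Prod.ext h1 h2
    · intro w hw
      simp only [Finset.mem_product] at hw
      obtain ⟨hwa, hwb⟩ := hw
      have hwa' := hwa; have hwb' := hwb
      simp only [hA, Finset.mem_filter, Finset.mem_univ, true_and] at hwa'
      simp only [hB, Finset.mem_filter, Finset.mem_univ, true_and] at hwb'
      obtain ⟨p1, hp1⟩ := emb_surj hlen v₂ w.1 (hWne _ hwa'.2)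
      obtain ⟨p2, hp2⟩ := emb_surj hlen v₂ w.2 (hWne _ hwb'.2)
      refine ⟨(p1, p2), ?_, Prod.ext hp1 hp2⟩
      have hne : w.1 ≠ w.2 := (harcfacts w.1 w.2 hwa'.1 hwb'.1).2.2
      simp only [Finset.mem_filter, pairsW, Finset.mem_univ, true_and]
      refine ⟨⟨fun he => hne ?_,
        (hwhite p1).mpr (by rw [show F p1 = w.1 from hp1]; exact hwa'.2),
        (hwhite p2).mpr (by rw [show F p2 = w.2 from hp2]; exact hwb'.2)⟩,
        by rw [show F p1 = w.1 from hp1]; exact hwa,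
        by rw [show F p2 = w.2 from hp2]; exact hwb⟩
      rw [← hp1, ← hp2, he]
  -- pointwise inequality
  have hpoint : ∀ q ∈ pairsW l',
      min J (blackArc l' q.1 q.2) + (if F q.1 ∈ A ∧ F q.2 ∈ B then 1 else 0)
        ≤ min J (blackArc l (F q.1) (F q.2)) := by
    intro q _
    have hBE := hBlackEq q.1 q.2
    by_cases hc : F q.1 ∈ A ∧ F q.2 ∈ B
    · obtain ⟨ha, hb⟩ := hc
      simp only [hA, Finset.mem_filter, Finset.mem_univ, true_and] at ha
      simp only [hB, Finset.mem_filter, Finset.mem_univ, true_and] at hb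
      obtain ⟨hv2arc, hle, hne⟩ := harcfacts _ _ ha.1 hb.1
      rw [if_pos hv2arc] at hBE
      have hJle : blackArc l (F q.1) (F q.2) ≤ J := le_trans hle harc
      rw [if_pos ⟨by simp [hA, Finset.mem_filter, ha], by simp [hB, Finset.mem_filter, hb]⟩]
      omega
    · rw [if_neg hc]
      split_ifs at hBE <;> omega
  calc mixture J l' + m₁ * m₂
      = (∑ q ∈ pairsW l', min J (blackArc l' q.1 q.2))
        + ∑ q ∈ pairsW l', (if F q.1 ∈ A ∧ F q.2 ∈ B then 1 else 0) := by
        rw [hS', hcount]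
    _ = ∑ q ∈ pairsW l', (min J (blackArc l' q.1 q.2)
        + (if F q.1 ∈ A ∧ F q.2 ∈ B then 1 else 0)) := by
        rw [Finset.sum_add_distrib]
    _ ≤ ∑ q ∈ pairsW l', min J (blackArc l (F q.1) (F q.2)) :=
        Finset.sum_le_sum hpoint
    _ = mixture J l := hS.symm

end Necklace
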